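/- Let H_X ∈ F_2^{r_X×n}, H_Z ∈ F_2^{s_Z×n}, H_X' ∈ F_2^{r_X'×n'}, H_Z' ∈ F_2^{s_Z'×n'} satisfy H_Z H_X^T = 0 and H_Z' (H_X')^T = 0. Let ∂_1 ∈ F_2^{n_A×r_A} and ∂_0 ∈ F_2^{s_A×n_A} satisfy ∂_0 ∂_1 = 0 and ker(∂_1^T) = im(∂_0^T). Let f_1 ∈ F_2^{n×r_A}, f_0 ∈ F_2^{s_Z×n_A}, f_1' ∈ F_2^{n'×r_A}, f_0' ∈ F_2^{s_Z'×n_A} satisfy H_Z f_1 = f_0 ∂_1 and H_Z' f_1' = f_0' ∂_1. Assume there exist v_1,…,v_k ∈ ker(∂_1) such that f_1 v_1,…,f_1 v_k project to a basis of ker(H_Z)/im(H_X^T) and f_1' v_1,…,f_1' v_k project to a basis of ker(H_Z')/im((H_X')^T). Form the merged check matrices H̃_X = [[H_X, 0, 0],[f_1^T, ∂_1^T, (f_1')^T],[0, 0, H_X']] and H̃_Z = [[H_Z, f_0, 0],[0, ∂_0, 0],[0, f_0', H_Z']], acting on F_2^{n+n_A+n'}. Then every v ∈ F_2^{n+n_A+n'}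 with H̃_X v = 0 and v ∉ im(H̃_Z^T) satisfies |v| ≥ d_Z + d_Z', where d_Z := min{|u| : H_X u = 0, u ∉ im(H_Z^T)} and d_Z' := min{|u'| : H_X' u' = 0, u' ∉ im((H_Z')^T)}. In other words, the Z-distance of the merged (cone) code is at least the sum of the Z-distances of the two constituent CSS codes. -/

import Mathlib

/-!
Write `v = (a, b, c)`. The outer rows of `H̃_X v = 0` say `H_X a = 0` and `H_X' c = 0`, and
pairing the middle row with `vᵢ ∈ ker ∂₁` gives `⟨f₁ vᵢ, a⟩ + ⟨f₁' vᵢ, c⟩ = 0`.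
If some of these pairings is nonzero, then `a` and `c` both pair nontrivially with an X-logical,
so they are Z-logicals and `|v| ≥ |a| + |c| ≥ d_Z + d_Z'`. If all of them vanish, `a` and `c` are
orthogonal to every X-logical, hence `a = H_Zᵀ μ` and `c = H_Z'ᵀ μ'`; the commuting squares then
put `b + f₀ᵀ μ + f₀'ᵀ μ'` in `ker ∂₁ᵀ = im ∂₀ᵀ`, which (in characteristic 2) writes `v` as
`H̃_Zᵀ (μ, ν, μ')`, a contradiction.
-/

open Matrix

theorem hammingNorm_sumElim {ι κ β : Type*} [Fintype ι] [Fintype κ] [Zero β] [DecidableEq β]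
    (f : ι → β) (g : κ → β) :
    hammingNorm (Sum.elim f g) = hammingNorm f + hammingNorm g := by
  simp only [hammingNorm, Finset.card_filter, Fintype.sum_sum_type, Sum.elim_inl, Sum.elim_inr]
  rfl

theorem exists_transpose_mulVec_eq_of_forall_dotProduct_eq_zero {K m n : Type*} [Field K]
    [Fintype m] [Fintype n] (M : Matrix m n K) {x : n → K}
    (h : ∀ y, M *ᵥ y = 0 → x ⬝ᵥ y = 0) : ∃ μ, Mᵀ *ᵥ μ = x := by
  classical
  have hx : dotProductEquiv K n x ∈ LinearMap.range M.mulVecLin.dualMap := by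
    rw [LinearMap.range_dualMap_eq_dualAnnihilator_ker, Submodule.mem_dualAnnihilator]
    exact fun y hy => h y hy
  obtain ⟨ψ, hψ⟩ := hx
  refine ⟨(dotProductEquiv K m).symm ψ,
    (dotProductEquiv K n).injective (LinearMap.ext fun y => ?_)⟩
  have hy := LinearMap.congr_fun hψ y
  rw [LinearMap.dualMap_apply, mulVecLin_apply, dotProductEquiv_apply_apply] at hy
  rw [dotProductEquiv_apply_apply, dotProductEquiv_apply_apply, ← hy, mulVec_transpose,
    ← dotProduct_mulVec, ← dotProductEquiv_apply_apply K m, LinearEquiv.apply_symm_apply]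

theorem not_exists_transpose_mulVec_eq_of_dotProduct_ne_zero {R m n : Type*} [CommRing R]
    [Fintype m] [Fintype n] {M : Matrix m n R} {y a : n → R} (hy : M *ᵥ y = 0)
    (h : y ⬝ᵥ a ≠ 0) : ¬ ∃ μ, Mᵀ *ᵥ μ = a := by
  rintro ⟨μ, rfl⟩
  rw [dotProduct_comm, mulVec_transpose, ← dotProduct_mulVec, hy, dotProduct_zero] at h
  exact h rfl

theorem exists_transpose_mulVec_eq_of_forall_dotProduct_eq_zero_of_span {K ι rX sZ n : Type*}
    [Field K] [Fintype ι] [Fintype rX] [Fintype sZ] [Fintype n] {HX : Matrix rX n K}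
    {HZ : Matrix sZ n K} {g : ι → n → K}
    (hspan : ∀ u, HZ *ᵥ u = 0 → ∃ (lam : ι → K) (w : rX → K), u = ∑ i, lam i • g i + HXᵀ *ᵥ w)
    {a : n → K} (ha : HX *ᵥ a = 0) (hg : ∀ i, g i ⬝ᵥ a = 0) : ∃ μ, HZᵀ *ᵥ μ = a := by
  refine exists_transpose_mulVec_eq_of_forall_dotProduct_eq_zero HZ fun y hy => ?_
  obtain ⟨lam, w, rfl⟩ := hspan y hy
  rw [dotProduct_comm]
  simp only [add_dotProduct, sum_dotProduct, smul_dotProduct, hg, smul_zero,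
    Finset.sum_const_zero, mulVec_transpose, ← dotProduct_mulVec, ha, dotProduct_zero, add_zero]

/-- `sInf ∅ = 0`: a code without Z-logicals has Z-distance `0` here. -/
noncomputable def zDistance {K rX sZ n : Type*} [Semiring K] [DecidableEq K] [Fintype sZ]
    [Fintype n] (HX : Matrix rX n K) (HZ : Matrix sZ n K) : ℕ :=
  sInf {t | ∃ u : n → K, HX *ᵥ u = 0 ∧ (¬ ∃ μ : sZ → K, HZᵀ *ᵥ μ = u) ∧ hammingNorm u = t}

theorem zDistance_le_hammingNorm {K rX sZ n : Type*} [Semiring K] [DecidableEq K] [Fintype sZ]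
    [Fintype n] {HX : Matrix rX n K} {HZ : Matrix sZ n K} {u : n → K} (hX : HX *ᵥ u = 0)
    (hZ : ¬ ∃ μ, HZᵀ *ᵥ μ = u) : zDistance HX HZ ≤ hammingNorm u :=
  Nat.sInf_le ⟨u, hX, hZ, rfl⟩

section MergedCode

variable {K : Type*} {rX rA rX' sZ sA sZ' n nA n' : Type*}

def mergedCheckX [Zero K] (HX : Matrix rX n K) (HX' : Matrix rX' n' K) (d1 : Matrix nA rA K)
    (f1 : Matrix n rA K) (f1' : Matrix n' rA K) : Matrix ((rX ⊕ rA) ⊕ rX') ((n ⊕ nA) ⊕ n') K :=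
  fromBlocks (fromBlocks HX 0 f1ᵀ d1ᵀ) (fromRows 0 f1'ᵀ) (fromCols 0 0) HX'

def mergedCheckZ [Zero K] (HZ : Matrix sZ n K) (HZ' : Matrix sZ' n' K) (d0 : Matrix sA nA K)
    (f0 : Matrix sZ nA K) (f0' : Matrix sZ' nA K) : Matrix ((sZ ⊕ sA) ⊕ sZ') ((n ⊕ nA) ⊕ n') K :=
  fromBlocks (fromBlocks HZ f0 0 d0) (fromRows 0 0) (fromCols 0 f0') HZ'

variable [CommRing K]

theorem mergedCheckX_mulVec_sumElim [Fintype n] [Fintype nA] [Fintype n'] (HX : Matrix rX n K)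
    (HX' : Matrix rX' n' K) (d1 : Matrix nA rA K) (f1 : Matrix n rA K) (f1' : Matrix n' rA K)
    (a : n → K) (b : nA → K) (c : n' → K) :
    mergedCheckX HX HX' d1 f1 f1' *ᵥ Sum.elim (Sum.elim a b) c =
      Sum.elim (Sum.elim (HX *ᵥ a) (f1ᵀ *ᵥ a + d1ᵀ *ᵥ b + f1'ᵀ *ᵥ c)) (HX' *ᵥ c) := by
  simp [mergedCheckX, fromBlocks_mulVec, fromRows_mulVec, ← Sum.elim_add_add]

theorem mergedCheckZ_transpose_mulVec_sumElim [Fintype sZ] [Fintype sA] [Fintype sZ']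
    (HZ : Matrix sZ n K) (HZ' : Matrix sZ' n' K) (d0 : Matrix sA nA K) (f0 : Matrix sZ nA K)
    (f0' : Matrix sZ' nA K) (μ : sZ → K) (ν : sA → K) (μ' : sZ' → K) :
    (mergedCheckZ HZ HZ' d0 f0 f0')ᵀ *ᵥ Sum.elim (Sum.elim μ ν) μ' =
      Sum.elim (Sum.elim (HZᵀ *ᵥ μ) (f0ᵀ *ᵥ μ + d0ᵀ *ᵥ ν + f0'ᵀ *ᵥ μ')) (HZ'ᵀ *ᵥ μ') := by
  simp [mergedCheckZ, fromBlocks_transpose, transpose_fromCols, fromBlocks_mulVec,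
    fromRows_mulVec, ← Sum.elim_add_add]

theorem dotProduct_add_dotProduct_eq_zero_of_mulVec_eq_zero [Fintype rA] [Fintype n]
    [Fintype nA] [Fintype n']
    {d1 : Matrix nA rA K} {f1 : Matrix n rA K} {f1' : Matrix n' rA K} {a : n → K} {b : nA → K}
    {c : n' → K} (h : f1ᵀ *ᵥ a + d1ᵀ *ᵥ b + f1'ᵀ *ᵥ c = 0) {x : rA → K} (hx : d1 *ᵥ x = 0) :
    (f1 *ᵥ x) ⬝ᵥ a + (f1' *ᵥ x) ⬝ᵥ c = 0 := by
  have hpair := congrArg (x ⬝ᵥ ·) h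
  simpa only [dotProduct_add, dotProduct_mulVec, vecMul_transpose, hx, zero_dotProduct, add_zero,
    dotProduct_zero] using hpair

theorem exists_mergedCheckZ_transpose_mulVec_eq [CharP K 2] [Fintype rA] [Fintype sZ]
    [Fintype sA] [Fintype sZ'] [Fintype n] [Fintype nA] [Fintype n'] {HZ : Matrix sZ n K}
    {HZ' : Matrix sZ' n' K} {d1 : Matrix nA rA K} {d0 : Matrix sA nA K} {f1 : Matrix n rA K}
    {f0 : Matrix sZ nA K} {f1' : Matrix n' rA K} {f0' : Matrix sZ' nA K}
    (hexact : LinearMap.ker d1ᵀ.mulVecLin = LinearMap.range d0ᵀ.mulVecLin)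
    (hcomm : HZ * f1 = f0 * d1) (hcomm' : HZ' * f1' = f0' * d1) {a : n → K} {b : nA → K}
    {c : n' → K} (h : f1ᵀ *ᵥ a + d1ᵀ *ᵥ b + f1'ᵀ *ᵥ c = 0) {μ : sZ → K} (hμ : HZᵀ *ᵥ μ = a)
    {μ' : sZ' → K} (hμ' : HZ'ᵀ *ᵥ μ' = c) :
    ∃ u, (mergedCheckZ HZ HZ' d0 f0 f0')ᵀ *ᵥ u = Sum.elim (Sum.elim a b) c := by
  have hker : b + f0ᵀ *ᵥ μ + f0'ᵀ *ᵥ μ' ∈ LinearMap.ker d1ᵀ.mulVecLin := by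
    rw [LinearMap.mem_ker, mulVecLin_apply, mulVec_add, mulVec_add, mulVec_mulVec,
      mulVec_mulVec, ← transpose_mul, ← transpose_mul, ← hcomm, ← hcomm', transpose_mul,
      transpose_mul, ← mulVec_mulVec, ← mulVec_mulVec, hμ, hμ', ← h]
    abel
  obtain ⟨ν, hν⟩ := hexact ▸ hker
  rw [mulVecLin_apply] at hν
  refine ⟨Sum.elim (Sum.elim μ ν) μ', ?_⟩
  rw [mergedCheckZ_transpose_mulVec_sumElim, hμ, hμ', hν]
  congr 2
  ext i
  simp only [Pi.add_apply]
  linear_combination ((f0ᵀ *ᵥ μ) i + (f0'ᵀ *ᵥ μ') i) * CharTwo.two_eq_zero (R := K)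

end MergedCode

theorem zLogical_components_of_mergedCode_zLogical
    {K rX rA rX' sZ sA sZ' n nA n' ι : Type*} [Field K] [CharP K 2] [Fintype rX] [Fintype rA]
    [Fintype rX'] [Fintype sZ] [Fintype sA] [Fintype sZ']
    [Fintype n] [Fintype nA] [Fintype n'] [Fintype ι] {HX : Matrix rX n K}
    {HZ : Matrix sZ n K} {HX' : Matrix rX' n' K} {HZ' : Matrix sZ' n' K} {d1 : Matrix nA rA K}
    {d0 : Matrix sA nA K} {f1 : Matrix n rA K} {f0 : Matrix sZ nA K} {f1' : Matrix n' rA K}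
    {f0' : Matrix sZ' nA K}
    (hexact : LinearMap.ker d1ᵀ.mulVecLin = LinearMap.range d0ᵀ.mulVecLin)
    (hcomm : HZ * f1 = f0 * d1) (hcomm' : HZ' * f1' = f0' * d1) {vb : ι → rA → K}
    (hvker : ∀ i, d1 *ᵥ vb i = 0) (hmem : ∀ i, HZ *ᵥ (f1 *ᵥ vb i) = 0)
    (hmem' : ∀ i, HZ' *ᵥ (f1' *ᵥ vb i) = 0)
    (hspan : ∀ u, HZ *ᵥ u = 0 →
      ∃ (lam : ι → K) (w : rX → K), u = ∑ i, lam i • f1 *ᵥ vb i + HXᵀ *ᵥ w)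
    (hspan' : ∀ u, HZ' *ᵥ u = 0 →
      ∃ (lam : ι → K) (w : rX' → K), u = ∑ i, lam i • f1' *ᵥ vb i + HX'ᵀ *ᵥ w)
    {a : n → K} {b : nA → K} {c : n' → K}
    (hX : mergedCheckX HX HX' d1 f1 f1' *ᵥ Sum.elim (Sum.elim a b) c = 0)
    (hZ : ¬ ∃ u, (mergedCheckZ HZ HZ' d0 f0 f0')ᵀ *ᵥ u = Sum.elim (Sum.elim a b) c) :
    (HX *ᵥ a = 0 ∧ ¬ ∃ μ, HZᵀ *ᵥ μ = a) ∧ (HX' *ᵥ c = 0 ∧ ¬ ∃ μ', HZ'ᵀ *ᵥ μ' = c) := by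
  rw [mergedCheckX_mulVec_sumElim, ← Sum.elim_zero_zero, ← Sum.elim_zero_zero, Sum.elim_eq_iff,
    Sum.elim_eq_iff] at hX
  obtain ⟨⟨ha, hmid⟩, hc⟩ := hX
  have hpair i := dotProduct_add_dotProduct_eq_zero_of_mulVec_eq_zero hmid (hvker i)
  by_cases hlog : ∀ i, (f1 *ᵥ vb i) ⬝ᵥ a = 0
  · obtain ⟨μ, hμ⟩ :=
      exists_transpose_mulVec_eq_of_forall_dotProduct_eq_zero_of_span hspan ha hlog
    obtain ⟨μ', hμ'⟩ :=
      exists_transpose_mulVec_eq_of_forall_dotProduct_eq_zero_of_span hspan' hc fun i => by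
        simpa [hlog i] using hpair i
    exact (hZ (exists_mergedCheckZ_transpose_mulVec_eq hexact hcomm hcomm' hmid hμ hμ')).elim
  · obtain ⟨i, hi⟩ := not_forall.mp hlog
    have hi' : (f1' *ᵥ vb i) ⬝ᵥ c ≠ 0 := fun h => hi (by simpa [h] using hpair i)
    exact ⟨⟨ha, not_exists_transpose_mulVec_eq_of_dotProduct_ne_zero (hmem i) hi⟩,
      ⟨hc, not_exists_transpose_mulVec_eq_of_dotProduct_ne_zero (hmem' i) hi'⟩⟩

theorem stmt_8_general (n nA n' rX sZ rX' sZ' sA rA k : ℕ)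
    (HX : Matrix (Fin rX) (Fin n) (ZMod 2)) (HZ : Matrix (Fin sZ) (Fin n) (ZMod 2))
    (HX' : Matrix (Fin rX') (Fin n') (ZMod 2)) (HZ' : Matrix (Fin sZ') (Fin n') (ZMod 2))
    (d1 : Matrix (Fin nA) (Fin rA) (ZMod 2)) (d0 : Matrix (Fin sA) (Fin nA) (ZMod 2))
    (f1 : Matrix (Fin n) (Fin rA) (ZMod 2)) (f0 : Matrix (Fin sZ) (Fin nA) (ZMod 2))
    (f1' : Matrix (Fin n') (Fin rA) (ZMod 2)) (f0' : Matrix (Fin sZ') (Fin nA) (ZMod 2))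
    (hexact : LinearMap.ker (Matrix.mulVecLin d1ᵀ) = LinearMap.range (Matrix.mulVecLin d0ᵀ))
    (hcomm : HZ * f1 = f0 * d1) (hcomm' : HZ' * f1' = f0' * d1)
    (vb : Fin k → (Fin rA → ZMod 2))
    (hvker : ∀ i, d1.mulVec (vb i) = 0)
    (hmem : ∀ i, HZ.mulVec (f1.mulVec (vb i)) = 0)
    (hmem' : ∀ i, HZ'.mulVec (f1'.mulVec (vb i)) = 0)
    (hspan : ∀ u : Fin n → ZMod 2, HZ.mulVec u = 0 →
      ∃ (lam : Fin k → ZMod 2) (w : Fin rX → ZMod 2),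
        u = (∑ i, lam i • f1.mulVec (vb i)) + HXᵀ.mulVec w)
    (hspan' : ∀ u : Fin n' → ZMod 2, HZ'.mulVec u = 0 →
      ∃ (lam : Fin k → ZMod 2) (w : Fin rX' → ZMod 2),
        u = (∑ i, lam i • f1'.mulVec (vb i)) + HX'ᵀ.mulVec w) :
    ∀ v : (Fin n ⊕ Fin nA) ⊕ Fin n' → ZMod 2,
      (Matrix.fromBlocks (Matrix.fromBlocks HX 0 f1ᵀ d1ᵀ)
          (Matrix.fromRows (0 : Matrix (Fin rX) (Fin n') (ZMod 2)) f1'ᵀ)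
          (Matrix.fromCols (0 : Matrix (Fin rX') (Fin n) (ZMod 2))
            (0 : Matrix (Fin rX') (Fin nA) (ZMod 2))) HX').mulVec v = 0 →
      (¬ ∃ u : (Fin sZ ⊕ Fin sA) ⊕ Fin sZ' → ZMod 2,
        (Matrix.fromBlocks (Matrix.fromBlocks HZ f0 0 d0)
            (Matrix.fromRows (0 : Matrix (Fin sZ) (Fin n') (ZMod 2))
              (0 : Matrix (Fin sA) (Fin n') (ZMod 2)))
            (Matrix.fromCols (0 : Matrix (Fin sZ') (Fin n) (ZMod 2)) f0')
            HZ')ᵀ.mulVec u = v) →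
      sInf {t | ∃ u : Fin n → ZMod 2, HX.mulVec u = 0 ∧
          (¬ ∃ μ : Fin sZ → ZMod 2, HZᵀ.mulVec μ = u) ∧ hammingNorm u = t} +
        sInf {t | ∃ u : Fin n' → ZMod 2, HX'.mulVec u = 0 ∧
          (¬ ∃ μ : Fin sZ' → ZMod 2, HZ'ᵀ.mulVec μ = u) ∧ hammingNorm u = t}
        ≤ hammingNorm v := by
  intro v hX hZ
  rw [← Sum.elim_comp_inl_inr v, ← Sum.elim_comp_inl_inr (v ∘ Sum.inl)] at hX hZ ⊢
  obtain ⟨⟨ha, ha'⟩, hc, hc'⟩ := zLogical_components_of_mergedCode_zLogical hexact hcomm hcomm'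
    hvker hmem hmem' hspan hspan' hX hZ
  rw [hammingNorm_sumElim, hammingNorm_sumElim]
  exact (add_le_add (zDistance_le_hammingNorm ha ha') (zDistance_le_hammingNorm hc hc')).trans
    (by omega)

/-- **Z-distance of the merged (cone) code (Lemma: distance_merged_code, Z part).**
Two CSS codes `(H_X, H_Z)` on `n` qubits and `(H_X', H_Z')` on `n'` qubits are merged
through an adapter `(∂₁, ∂₀)` with `∂₀∂₁ = 0`, `ker ∂₁ᵀ = im ∂₀ᵀ`, commuting squares
`H_Z f₁ = f₀ ∂₁`, `H_Z' f₁' = f₀' ∂₁`, and vectors `v₁, …, v_k ∈ ker ∂₁` such that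
`f₁ v_i` (resp. `f₁' v_i`) project to a basis of `ker H_Z / im H_Xᵀ`
(resp. `ker H_Z' / im H_X'ᵀ`).  Then every Z-logical of the merged code
`H̃_X = [[H_X,0,0],[f₁ᵀ,∂₁ᵀ,f₁'ᵀ],[0,0,H_X']]`, `H̃_Z = [[H_Z,f₀,0],[0,∂₀,0],[0,f₀',H_Z']]`
has weight at least `d_Z + d_Z'`. -/
theorem stmt_8 (n nA n' rX sZ rX' sZ' sA rA k : ℕ)
    (HX : Matrix (Fin rX) (Fin n) (ZMod 2)) (HZ : Matrix (Fin sZ) (Fin n) (ZMod 2))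
    (HX' : Matrix (Fin rX') (Fin n') (ZMod 2)) (HZ' : Matrix (Fin sZ') (Fin n') (ZMod 2))
    (d1 : Matrix (Fin nA) (Fin rA) (ZMod 2)) (d0 : Matrix (Fin sA) (Fin nA) (ZMod 2))
    (f1 : Matrix (Fin n) (Fin rA) (ZMod 2)) (f0 : Matrix (Fin sZ) (Fin nA) (ZMod 2))
    (f1' : Matrix (Fin n') (Fin rA) (ZMod 2)) (f0' : Matrix (Fin sZ') (Fin nA) (ZMod 2))
    (hcss : HZ * HXᵀ = 0) (hcss' : HZ' * HX'ᵀ = 0)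
    (hchain : d0 * d1 = 0)
    (hexact : LinearMap.ker (Matrix.mulVecLin d1ᵀ) = LinearMap.range (Matrix.mulVecLin d0ᵀ))
    (hcomm : HZ * f1 = f0 * d1) (hcomm' : HZ' * f1' = f0' * d1)
    (vb : Fin k → (Fin rA → ZMod 2))
    (hvker : ∀ i, d1.mulVec (vb i) = 0)
    (hmem : ∀ i, HZ.mulVec (f1.mulVec (vb i)) = 0)
    (hmem' : ∀ i, HZ'.mulVec (f1'.mulVec (vb i)) = 0)
    (hspan : ∀ u : Fin n → ZMod 2, HZ.mulVec u = 0 →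
      ∃ (lam : Fin k → ZMod 2) (w : Fin rX → ZMod 2),
        u = (∑ i, lam i • f1.mulVec (vb i)) + HXᵀ.mulVec w)
    (hindep : ∀ (lam : Fin k → ZMod 2) (w : Fin rX → ZMod 2),
      (∑ i, lam i • f1.mulVec (vb i)) = HXᵀ.mulVec w → lam = 0)
    (hspan' : ∀ u : Fin n' → ZMod 2, HZ'.mulVec u = 0 →
      ∃ (lam : Fin k → ZMod 2) (w : Fin rX' → ZMod 2),
        u = (∑ i, lam i • f1'.mulVec (vb i)) + HX'ᵀ.mulVec w)
    (hindep' : ∀ (lam : Fin k → ZMod 2) (w : Fin rX' → ZMod 2),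
      (∑ i, lam i • f1'.mulVec (vb i)) = HX'ᵀ.mulVec w → lam = 0) :
    ∀ v : (Fin n ⊕ Fin nA) ⊕ Fin n' → ZMod 2,
      (Matrix.fromBlocks (Matrix.fromBlocks HX 0 f1ᵀ d1ᵀ)
          (Matrix.fromRows (0 : Matrix (Fin rX) (Fin n') (ZMod 2)) f1'ᵀ)
          (Matrix.fromCols (0 : Matrix (Fin rX') (Fin n) (ZMod 2))
            (0 : Matrix (Fin rX') (Fin nA) (ZMod 2))) HX').mulVec v = 0 →
      (¬ ∃ u : (Fin sZ ⊕ Fin sA) ⊕ Fin sZ' → ZMod 2,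
        (Matrix.fromBlocks (Matrix.fromBlocks HZ f0 0 d0)
            (Matrix.fromRows (0 : Matrix (Fin sZ) (Fin n') (ZMod 2))
              (0 : Matrix (Fin sA) (Fin n') (ZMod 2)))
            (Matrix.fromCols (0 : Matrix (Fin sZ') (Fin n) (ZMod 2)) f0')
            HZ')ᵀ.mulVec u = v) →
      sInf {t | ∃ u : Fin n → ZMod 2, HX.mulVec u = 0 ∧
          (¬ ∃ μ : Fin sZ → ZMod 2, HZᵀ.mulVec μ = u) ∧ hammingNorm u = t} +
        sInf {t | ∃ u : Fin n' → ZMod 2, HX'.mulVec u = 0 ∧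
          (¬ ∃ μ : Fin sZ' → ZMod 2, HZ'ᵀ.mulVec μ = u) ∧ hammingNorm u = t}
        ≤ hammingNorm v :=
  stmt_8_general n nA n' rX sZ rX' sZ' sA rA k HX HZ HX' HZ' d1 d0 f1 f0 f1' f0' hexact hcomm hcomm'
    vb hvker hmem hmem' hspan hspan'
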